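/- arXiv:2404.16788 — 11 statements merged into one kernel-verified Lean document; each statement's English description precedes it below -/
import Mathlib

section
/- Let V be an anti-torqued vector field with conformal scalar f on an open set Ω ⊆ E^m and let λ x = ‖V x‖. Then for every x ∈ Ω (where λ x > 0), the function λ is differentiable at x and fderiv ℝ λ x u = f x * (1 − (λ x)^2) * ⟪u, V x⟫ / λ x for all u ∈ E^m. In particular, the derivative of λ in the unit direction V x / λ x equals f x * (1 − (λ x)^2), and the derivative of λ in every direction orthogonal to V x vanishes. -/
open scoped RealInnerProductSpace

/-- For an anti-torqued vector field `V` with conformal scalar `f`,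
the length function `λ x = ‖V x‖` is differentiable with
`dλ_x(u) = f x * (1 − λ x ^ 2) * ⟪u, V x⟫ / λ x`; in particular its derivative in
the unit direction `V x / λ x` equals `f x * (1 − λ x ^ 2)` and its derivative in
every direction orthogonal to `V x` vanishes. -/
theorem anti_torqued_length_derivative (m : ℕ)
    (Ω : Set (EuclideanSpace ℝ (Fin m))) (hΩ : IsOpen Ω)
    (V : EuclideanSpace ℝ (Fin m) → EuclideanSpace ℝ (Fin m))
    (f : EuclideanSpace ℝ (Fin m) → ℝ)
    (hVdiff : ∀ x ∈ Ω, DifferentiableAt ℝ V x)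
    (hVne : ∀ x ∈ Ω, V x ≠ 0)
    (hAT : ∀ x ∈ Ω, ∀ u : EuclideanSpace ℝ (Fin m),
      fderiv ℝ V x u = f x • (u - ⟪u, V x⟫ • V x))
    (lam : EuclideanSpace ℝ (Fin m) → ℝ)
    (hlam : lam = fun x => ‖V x‖) :
    ∀ x ∈ Ω,
      DifferentiableAt ℝ lam x ∧
      (∀ u : EuclideanSpace ℝ (Fin m),
        fderiv ℝ lam x u = f x * (1 - (lam x) ^ 2) * ⟪u, V x⟫ / lam x) ∧
      fderiv ℝ lam x ((lam x)⁻¹ • V x) = f x * (1 - (lam x) ^ 2) ∧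
      (∀ u : EuclideanSpace ℝ (Fin m), ⟪u, V x⟫ = 0 → fderiv ℝ lam x u = 0) := by
  subst hlam
  intro x hx
  have hV0 := hVne x hx
  have hpos : (0:ℝ) < ‖V x‖ := norm_pos_iff.mpr hV0
  have hg : HasFDerivAt (fun y => ‖V y‖ ^ 2)
      (2 • (innerSL ℝ (V x)).comp (fderiv ℝ V x)) x :=
    (hVdiff x hx).hasFDerivAt.norm_sq
  have hgx : ‖V x‖ ^ 2 ≠ 0 := pow_ne_zero _ hpos.ne'
  have hs := hg.sqrt hgx
  have heq : (fun y => Real.sqrt (‖V y‖ ^ 2)) = fun y => ‖V y‖ := by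
    funext y; rw [Real.sqrt_sq (norm_nonneg _)]
  rw [heq] at hs
  have hd : DifferentiableAt ℝ (fun y => ‖V y‖) x := hs.differentiableAt
  have hsq : Real.sqrt (‖V x‖ ^ 2) = ‖V x‖ := Real.sqrt_sq (norm_nonneg _)
  have key : ∀ u, fderiv ℝ (fun y => ‖V y‖) x u
      = f x * (1 - ‖V x‖ ^ 2) * ⟪u, V x⟫ / ‖V x‖ := by
    intro u
    rw [hs.fderiv]
    simp only [ContinuousLinearMap.coe_smul', Pi.smul_apply,
      ContinuousLinearMap.smul_apply, ContinuousLinearMap.coe_comp',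
      Function.comp_apply, innerSL_apply_apply, hsq, hAT x hx u]
    rw [inner_smul_right, inner_sub_right, inner_smul_right,
      real_inner_self_eq_norm_sq, real_inner_comm (V x) u]
    field_simp [hpos.ne']
    have h0 : ‖V x‖ * ‖V x‖⁻¹ = 1 := mul_inv_cancel₀ hpos.ne'
    linear_combination (f x * ⟪V x, u⟫ - ‖V x‖ ^ 2 * f x * ⟪V x, u⟫) * h0
  refine ⟨hd, key, ?_, ?_⟩
  · rw [key, real_inner_smul_left, real_inner_self_eq_norm_sq]
    have h0 : ‖V x‖ ≠ 0 := hpos.ne'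
    simp only []
    field_simp
  · intro u hu
    rw [key, hu]
    ring
end

section
/- Let V be an anti-torqued vector field with conformal scalar f on an open set Ω ⊆ E^m, let λ x = ‖V x‖ > 0, and let E₁ x = (λ x)⁻¹ • V x be the unit vector field in the direction of V. Then fderiv ℝ E₁ x (E₁ x) = 0 for every x ∈ Ω; that is, the integral curves of E₁ are geodesics of the ambient space. -/
open scoped RealInnerProductSpace

/-- The unit vector field `E₁ = V/‖V‖` in the direction of an
anti-torqued vector field `V` satisfies `∇_{E₁} E₁ = 0`: its integral curves are
geodesics of the ambient space. -/
theorem anti_torqued_unit_direction_geodesic (m : ℕ)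
    (Ω : Set (EuclideanSpace ℝ (Fin m))) (hΩ : IsOpen Ω)
    (V : EuclideanSpace ℝ (Fin m) → EuclideanSpace ℝ (Fin m))
    (f : EuclideanSpace ℝ (Fin m) → ℝ)
    (hVdiff : ∀ x ∈ Ω, DifferentiableAt ℝ V x)
    (hVne : ∀ x ∈ Ω, V x ≠ 0)
    (hAT : ∀ x ∈ Ω, ∀ u : EuclideanSpace ℝ (Fin m),
      fderiv ℝ V x u = f x • (u - ⟪u, V x⟫ • V x))
    (E₁ : EuclideanSpace ℝ (Fin m) → EuclideanSpace ℝ (Fin m))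
    (hE₁ : E₁ = fun x => ‖V x‖⁻¹ • V x) :
    ∀ x ∈ Ω, fderiv ℝ E₁ x (E₁ x) = 0 := by
  subst hE₁
  intro x hx
  have hn := hVne x hx
  set L : ℝ := ‖V x‖ with hLdef
  have hL0 : L ≠ 0 := norm_ne_zero_iff.mpr hn
  set V' := fderiv ℝ V x with hV'def
  have hV' : HasFDerivAt V V' x := (hVdiff x hx).hasFDerivAt
  have hNdiff : DifferentiableAt ℝ (fun y => ‖V y‖) x := (hVdiff x hx).norm ℝ hn
  set N' := fderiv ℝ (fun y => ‖V y‖) x with hN'def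
  have hN' : HasFDerivAt (fun y => ‖V y‖) N' x := hNdiff.hasFDerivAt
  -- derivative of ‖V·‖² two ways
  have h1 : HasFDerivAt (fun y => ‖V y‖ * ‖V y‖) (L • N' + L • N') x := hN'.mul hN'
  have h2 : HasFDerivAt (fun y => ‖V y‖ * ‖V y‖)
      ((2 : ℕ) • (innerSL ℝ (V x)).comp V') x := by
    have := hV'.norm_sq
    simpa [pow_two] using this
  have heq := h1.unique h2
  have hNval : ∀ u, N' u = L⁻¹ * ⟪V x, V' u⟫ := by
    intro u
    have h := ContinuousLinearMap.ext_iff.mp heq u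
    simp only [ContinuousLinearMap.add_apply, ContinuousLinearMap.smul_apply,
      ContinuousLinearMap.coe_smul', Pi.smul_apply, smul_eq_mul,
      ContinuousLinearMap.coe_comp', Function.comp_apply, innerSL_apply_apply,
      nsmul_eq_mul, Nat.cast_ofNat] at h
    have hkey : L * N' u = ⟪V x, V' u⟫ := by linarith
    rw [← hkey, inv_mul_cancel_left₀ hL0]
  -- derivative of ‖V·‖⁻¹
  have hinv : HasFDerivAt (fun y => ‖V y‖⁻¹) ((-(L ^ 2)⁻¹) • N') x := by
    exact (hasDerivAt_inv hL0).comp_hasFDerivAt x hN'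
  -- derivative of E₁
  have hD : HasFDerivAt (fun y => ‖V y‖⁻¹ • V y)
      (L⁻¹ • V' + ((-(L ^ 2)⁻¹) • N').smulRight (V x)) x := hinv.smul hV'
  rw [hD.fderiv]
  -- evaluate at E₁ x = L⁻¹ • V x
  have hVu : V' (L⁻¹ • V x) = (f x * (L⁻¹ - L)) • V x := by
    rw [hV'def, hAT x hx]
    have hip : ⟪L⁻¹ • V x, V x⟫ = L := by
      rw [real_inner_smul_left, real_inner_self_eq_norm_mul_norm, ← hLdef]
      field_simp
    rw [hip]
    simp only [smul_sub, smul_smul, sub_smul, mul_sub]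
  have hNu : N' (L⁻¹ • V x) = f x * (L⁻¹ - L) * L := by
    rw [hNval, hVu, real_inner_smul_right, real_inner_self_eq_norm_mul_norm, ← hLdef]
    field_simp
  simp only [ContinuousLinearMap.add_apply, ContinuousLinearMap.smul_apply,
    ContinuousLinearMap.smulRight_apply, ContinuousLinearMap.coe_smul', Pi.smul_apply,
    ← hLdef, hVu, hNu, smul_eq_mul]
  rw [smul_smul, ← add_smul]
  convert zero_smul ℝ (V x) using 2
  field_simp
  ring
end

section
/- Let V be an anti-torqued vector field with conformal scalar f on an open set Ω ⊆ E^m, and let u, w ∈ E^m be vectors orthogonal to V x at a point x ∈ Ω with λ x = ‖V x‖ > 0. Then the unit vector field E₁ = (λ)⁻¹ • V satisfies fderiv ℝ E₁ x u = (f x / λ x) • u for every u orthogonal to V x. (This expresses that the distribution orthogonal to V integrates to totally umbilical hypersurfaces with mean curvature f/λ, the key step in proving that a Riemannian manifold admitting an anti-torqued vector field is locally a warped product I ×_λ F.) -/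
open scoped RealInnerProductSpace

/-- For an anti-torqued vector field `V` with conformal scalar `f`
and `λ = ‖V‖`, the unit field `E₁ = λ⁻¹ • V` satisfies
`∇_u E₁ = (f/λ) • u` for every direction `u` orthogonal to `V`. -/
theorem anti_torqued_orthogonal_umbilical (m : ℕ)
    (Ω : Set (EuclideanSpace ℝ (Fin m))) (hΩ : IsOpen Ω)
    (V : EuclideanSpace ℝ (Fin m) → EuclideanSpace ℝ (Fin m))
    (f : EuclideanSpace ℝ (Fin m) → ℝ)
    (hVdiff : ∀ x ∈ Ω, DifferentiableAt ℝ V x)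
    (hVne : ∀ x ∈ Ω, V x ≠ 0)
    (hAT : ∀ x ∈ Ω, ∀ u : EuclideanSpace ℝ (Fin m),
      fderiv ℝ V x u = f x • (u - ⟪u, V x⟫ • V x))
    (lam : EuclideanSpace ℝ (Fin m) → ℝ) (hlam : lam = fun x => ‖V x‖)
    (E₁ : EuclideanSpace ℝ (Fin m) → EuclideanSpace ℝ (Fin m))
    (hE₁ : E₁ = fun x => (lam x)⁻¹ • V x) :
    ∀ x ∈ Ω, ∀ u : EuclideanSpace ℝ (Fin m), ⟪u, V x⟫ = 0 →
      fderiv ℝ E₁ x u = (f x / lam x) • u := by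
  intro x hx u hu
  set D := fderiv ℝ V x with hD
  have hV : HasFDerivAt V D x := (hVdiff x hx).hasFDerivAt
  have hq : HasFDerivAt (fun y => ⟪V y, V y⟫)
      ((fderivInnerCLM ℝ (V x, V x)).comp <| D.prod D) x := hV.inner ℝ hV
  have hqx : ⟪V x, V x⟫ ≠ 0 := by
    rw [real_inner_self_eq_norm_sq]
    exact pow_ne_zero 2 (norm_ne_zero_iff.mpr (hVne x hx))
  have hsqrt : HasDerivAt Real.sqrt (1 / (2 * Real.sqrt ⟪V x, V x⟫)) ⟪V x, V x⟫ :=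
    Real.hasDerivAt_sqrt hqx
  have hlamfd : HasFDerivAt lam
      ((1 / (2 * Real.sqrt ⟪V x, V x⟫)) • ((fderivInnerCLM ℝ (V x, V x)).comp <| D.prod D)) x := by
    have := hsqrt.comp_hasFDerivAt x hq
    have heq : lam = fun y => Real.sqrt ⟪V y, V y⟫ := by
      funext y
      rw [hlam, real_inner_self_eq_norm_sq, Real.sqrt_sq (norm_nonneg _)]
    rw [heq]
    exact this
  have hlamne : lam x ≠ 0 := by
    rw [hlam]; simpa using hVne x hx
  have hinv := (hasDerivAt_inv hlamne).comp_hasFDerivAt x hlamfd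
  have hE : HasFDerivAt E₁
      ((lam x)⁻¹ • D + (-(lam x ^ 2)⁻¹ • ((1 / (2 * Real.sqrt ⟪V x, V x⟫)) • ((fderivInnerCLM ℝ (V x, V x)).comp <| D.prod D))).smulRight (V x)) x := by
    rw [hE₁]
    exact hinv.smul hV
  rw [hE.fderiv]
  have hDu : D u = f x • u := by
    rw [hD, hAT x hx u, hu]; simp
  simp only [ContinuousLinearMap.add_apply, ContinuousLinearMap.smul_apply,
    ContinuousLinearMap.smulRight_apply, ContinuousLinearMap.comp_apply,
    ContinuousLinearMap.prod_apply, fderivInnerCLM_apply, hDu]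
  have h2 : ⟪V x, u⟫ = 0 := by rw [real_inner_comm]; exact hu
  rw [real_inner_smul_right, real_inner_smul_left, h2, hu]
  simp only [mul_zero, zero_add, add_zero, smul_zero, zero_smul]
  rw [smul_smul, div_eq_mul_inv, mul_comm]
end

section
/- Let V be an anti-torqued vector field with conformal scalar f on an open set Ω ⊆ E^m, and let ψ : U → Ω be a differentiable map on an open set U ⊆ E^n. Suppose V is normal along ψ, i.e. ⟪V (ψ p), fderiv ℝ ψ p u⟫ = 0 for all p ∈ U and u ∈ E^n. Then fderiv ℝ (V ∘ ψ) p u = f (ψ p) • fderiv ℝ ψ p u for all p ∈ U and u ∈ E^n. (Consequently the normal component V^⊥ = V∘ψ is a parallel normal direction and an umbilical direction, with shape operator A_{V^⊥} = −f · Id.) -/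
open scoped RealInnerProductSpace

/-- If an anti-torqued vector field `V` is normal along a
submanifold `ψ : U → Ω`, then `∇_u (V∘ψ) = f • dψ(u)`: the normal component
`V^⊥ = V∘ψ` is a parallel normal direction and an umbilical direction with
shape operator `A_{V^⊥} = −f · Id`. -/
theorem anti_torqued_normal_along_submanifold (m n : ℕ)
    (Ω : Set (EuclideanSpace ℝ (Fin m))) (hΩ : IsOpen Ω)
    (V : EuclideanSpace ℝ (Fin m) → EuclideanSpace ℝ (Fin m))
    (f : EuclideanSpace ℝ (Fin m) → ℝ)
    (hVdiff : ∀ x ∈ Ω, DifferentiableAt ℝ V x)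
    (hVne : ∀ x ∈ Ω, V x ≠ 0)
    (hAT : ∀ x ∈ Ω, ∀ u : EuclideanSpace ℝ (Fin m),
      fderiv ℝ V x u = f x • (u - ⟪u, V x⟫ • V x))
    (U : Set (EuclideanSpace ℝ (Fin n))) (hU : IsOpen U)
    (ψ : EuclideanSpace ℝ (Fin n) → EuclideanSpace ℝ (Fin m))
    (hmaps : Set.MapsTo ψ U Ω)
    (hψ : ∀ p ∈ U, DifferentiableAt ℝ ψ p)
    (hnormal : ∀ p ∈ U, ∀ u : EuclideanSpace ℝ (Fin n),
      ⟪V (ψ p), fderiv ℝ ψ p u⟫ = 0) :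
    ∀ p ∈ U, ∀ u : EuclideanSpace ℝ (Fin n),
      fderiv ℝ (V ∘ ψ) p u = f (ψ p) • fderiv ℝ ψ p u := by
  intro p hp u
  have hψΩ : ψ p ∈ Ω := hmaps hp
  have hchain : fderiv ℝ (V ∘ ψ) p = (fderiv ℝ V (ψ p)).comp (fderiv ℝ ψ p) :=
    fderiv_comp p (hVdiff _ hψΩ) (hψ p hp)
  rw [hchain]
  simp only [ContinuousLinearMap.comp_apply]
  rw [hAT _ hψΩ]
  have h0 : ⟪fderiv ℝ ψ p u, V (ψ p)⟫ = 0 := by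
    rw [real_inner_comm]; exact hnormal p hp u
  rw [h0]
  simp
end

section
/- Let V be an anti-torqued vector field with conformal scalar f and ‖V x‖ = 1 on an open set Ω ⊆ E^m, and let ψ : U → Ω be a differentiable map on an open set U ⊆ E^n. Suppose V is tangent along ψ, i.e. V (ψ p) ∈ Set.range (fderiv ℝ ψ p) for every p ∈ U. Then fderiv ℝ (V ∘ ψ) p u ∈ Set.range (fderiv ℝ ψ p) for every p ∈ U and u ∈ E^n; that is, the normal component of the ambient derivative of V along the submanifold vanishes identically (equivalently h(X, V^⊤) = 0 for all tangent X, so every shape operator of the submanifold has zero determinant). -/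
open scoped RealInnerProductSpace

/-- If a unit anti-torqued vector field `V` is tangent along a
submanifold `ψ : U → Ω`, then the ambient derivative of `V` along the
submanifold stays tangent: the normal component of `∇_u (V∘ψ)` vanishes
identically (equivalently `h(X, V^⊤) = 0` for all tangent `X`). -/
theorem unit_anti_torqued_tangent_along_submanifold (m n : ℕ)
    (Ω : Set (EuclideanSpace ℝ (Fin m))) (hΩ : IsOpen Ω)
    (V : EuclideanSpace ℝ (Fin m) → EuclideanSpace ℝ (Fin m))
    (f : EuclideanSpace ℝ (Fin m) → ℝ)
    (hVdiff : ∀ x ∈ Ω, DifferentiableAt ℝ V x)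
    (hVne : ∀ x ∈ Ω, V x ≠ 0)
    (hAT : ∀ x ∈ Ω, ∀ u : EuclideanSpace ℝ (Fin m),
      fderiv ℝ V x u = f x • (u - ⟪u, V x⟫ • V x))
    (hunit : ∀ x ∈ Ω, ‖V x‖ = 1)
    (U : Set (EuclideanSpace ℝ (Fin n))) (hU : IsOpen U)
    (ψ : EuclideanSpace ℝ (Fin n) → EuclideanSpace ℝ (Fin m))
    (hmaps : Set.MapsTo ψ U Ω)
    (hψ : ∀ p ∈ U, DifferentiableAt ℝ ψ p)
    (htangent : ∀ p ∈ U, V (ψ p) ∈ Set.range (fderiv ℝ ψ p)) :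
    ∀ p ∈ U, ∀ u : EuclideanSpace ℝ (Fin n),
      fderiv ℝ (V ∘ ψ) p u ∈ Set.range (fderiv ℝ ψ p) := by
  intro p hp u
  have hΩp : ψ p ∈ Ω := hmaps hp
  have hcomp : fderiv ℝ (V ∘ ψ) p = (fderiv ℝ V (ψ p)).comp (fderiv ℝ ψ p) :=
    fderiv_comp p (hVdiff _ hΩp) (hψ p hp)
  rw [hcomp]
  simp only [ContinuousLinearMap.coe_comp', Function.comp_apply]
  rw [hAT _ hΩp]
  obtain ⟨v, hv⟩ := htangent p hp
  refine ⟨f (ψ p) • (u - ⟪fderiv ℝ ψ p u, V (ψ p)⟫ • v), ?_⟩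
  rw [map_smul, map_sub, map_smul, hv]
end

section
/- Let V be an anti-torqued vector field with conformal scalar f on an open set Ω ⊆ E^m, let ψ : U → Ω be a differentiable map on an open set U ⊆ E^{m−1} (a hypersurface), and let N : U → E^m be a differentiable unit normal field: ‖N p‖ = 1 and ⟪N p, fderiv ℝ ψ p u⟫ = 0 for all p ∈ U, u ∈ E^{m−1}. Suppose V is tangent along ψ, i.e. V (ψ p) ∈ Set.range (fderiv ℝ ψ p) for every p. Then ⟪fderiv ℝ N p u, V (ψ p)⟫ = 0 for all p ∈ U and u ∈ E^{m−1}; that is, the Weingarten map of the hypersurface annihilates the (nonzero) tangential direction V, so the shape operator of a rectifying hypersurface with anti-torqued axis has zero determinant. -/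
open scoped RealInnerProductSpace

/-- If an anti-torqued vector field `V` is tangent along a
hypersurface `ψ : U ⊆ E^{m-1} → Ω ⊆ E^m` with differentiable unit normal
field `N`, then `⟪dN(u), V∘ψ⟫ = 0`: the Weingarten map annihilates the
tangential direction `V`, so the shape operator has zero determinant. -/
theorem rectifying_hypersurface_shape_operator_degenerate (m : ℕ)
    (Ω : Set (EuclideanSpace ℝ (Fin m))) (hΩ : IsOpen Ω)
    (V : EuclideanSpace ℝ (Fin m) → EuclideanSpace ℝ (Fin m))
    (f : EuclideanSpace ℝ (Fin m) → ℝ)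
    (hVdiff : ∀ x ∈ Ω, DifferentiableAt ℝ V x)
    (hVne : ∀ x ∈ Ω, V x ≠ 0)
    (hAT : ∀ x ∈ Ω, ∀ u : EuclideanSpace ℝ (Fin m),
      fderiv ℝ V x u = f x • (u - ⟪u, V x⟫ • V x))
    (U : Set (EuclideanSpace ℝ (Fin (m - 1)))) (hU : IsOpen U)
    (ψ : EuclideanSpace ℝ (Fin (m - 1)) → EuclideanSpace ℝ (Fin m))
    (hmaps : Set.MapsTo ψ U Ω)
    (hψ : ∀ p ∈ U, DifferentiableAt ℝ ψ p)
    (N : EuclideanSpace ℝ (Fin (m - 1)) → EuclideanSpace ℝ (Fin m))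
    (hNdiff : ∀ p ∈ U, DifferentiableAt ℝ N p)
    (hNunit : ∀ p ∈ U, ‖N p‖ = 1)
    (hNnormal : ∀ p ∈ U, ∀ u : EuclideanSpace ℝ (Fin (m - 1)),
      ⟪N p, fderiv ℝ ψ p u⟫ = 0)
    (htangent : ∀ p ∈ U, V (ψ p) ∈ Set.range (fderiv ℝ ψ p)) :
    ∀ p ∈ U, ∀ u : EuclideanSpace ℝ (Fin (m - 1)),
      ⟪fderiv ℝ N p u, V (ψ p)⟫ = 0 := by
  intro p hp u
  have hψΩ : ψ p ∈ Ω := hmaps hp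
  have hψd := hψ p hp
  have hVd := hVdiff _ hψΩ
  -- ⟪N q, V (ψ q)⟫ = 0 on U
  have hNV : ∀ q ∈ U, ⟪N q, V (ψ q)⟫ = 0 := by
    intro q hq
    obtain ⟨w, hw⟩ := htangent q hq
    rw [← hw]
    exact hNnormal q hq w
  have hVψd : DifferentiableAt ℝ (fun q => V (ψ q)) p := hVd.comp p hψd
  have hchain : fderiv ℝ (fun q => V (ψ q)) p =
      (fderiv ℝ V (ψ p)).comp (fderiv ℝ ψ p) := fderiv_comp p hVd hψd
  -- the inner product function is eventually 0
  have hg0 : (fun q => ⟪N q, V (ψ q)⟫) =ᶠ[nhds p] (fun _ => (0 : ℝ)) := by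
    filter_upwards [hU.mem_nhds hp] with q hq using hNV q hq
  have hgderiv : fderiv ℝ (fun q => ⟪N q, V (ψ q)⟫) p = 0 := by
    rw [hg0.fderiv_eq, fderiv_fun_const]
    rfl
  have hsum := fderiv_inner_apply (𝕜 := ℝ) (hNdiff p hp) hVψd u
  rw [hgderiv] at hsum
  have hNVψ : ⟪N p, fderiv ℝ (fun q => V (ψ q)) p u⟫ = 0 := by
    rw [hchain]
    simp only [ContinuousLinearMap.comp_apply]
    rw [hAT _ hψΩ]
    rw [inner_smul_right, inner_sub_right, inner_smul_right,
      hNnormal p hp u, hNV p hp]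
    ring
  have := hsum
  simp only [ContinuousLinearMap.zero_apply] at this
  linarith [this.symm, hNVψ]
end

section
/- Let V be a torqued vector field with conformal scalar f and generating vector field W on an open set Ω ⊆ E^m, and let ψ : U → Ω be a differentiable map on an open set U ⊆ E^n. Suppose V is tangent along ψ (V (ψ p) ∈ Set.range (fderiv ℝ ψ p) for all p) and W is normal along ψ (⟪W (ψ p), fderiv ℝ ψ p u⟫ = 0 for all p, u). Then fderiv ℝ (V ∘ ψ) p u = f (ψ p) • fderiv ℝ ψ p u for all p ∈ U and u ∈ E^n. (Consequently V^⊤ = V∘ψ is a concircular vector field on the submanifold, h(X, V) = 0 for all tangent X, and every shape operator has zero determinant.) -/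
open scoped RealInnerProductSpace

/-- If a torqued vector field `V` (with conformal scalar `f` and
generating vector field `W`) is tangent along a submanifold `ψ : U → Ω` while
`W` is normal along `ψ`, then `∇_u (V∘ψ) = f • dψ(u)`: `V^⊤ = V∘ψ` is a
concircular vector field on the submanifold. -/
theorem torqued_tangent_along_submanifold (m n : ℕ)
    (Ω : Set (EuclideanSpace ℝ (Fin m))) (hΩ : IsOpen Ω)
    (V W : EuclideanSpace ℝ (Fin m) → EuclideanSpace ℝ (Fin m))
    (f : EuclideanSpace ℝ (Fin m) → ℝ)
    (hVdiff : ∀ x ∈ Ω, DifferentiableAt ℝ V x)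
    (hVne : ∀ x ∈ Ω, V x ≠ 0)
    (hT : ∀ x ∈ Ω, ∀ u : EuclideanSpace ℝ (Fin m),
      fderiv ℝ V x u = f x • u + ⟪W x, u⟫ • V x)
    (hWV : ∀ x ∈ Ω, ⟪W x, V x⟫ = 0)
    (U : Set (EuclideanSpace ℝ (Fin n))) (hU : IsOpen U)
    (ψ : EuclideanSpace ℝ (Fin n) → EuclideanSpace ℝ (Fin m))
    (hmaps : Set.MapsTo ψ U Ω)
    (hψ : ∀ p ∈ U, DifferentiableAt ℝ ψ p)
    (hVtangent : ∀ p ∈ U, V (ψ p) ∈ Set.range (fderiv ℝ ψ p))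
    (hWnormal : ∀ p ∈ U, ∀ u : EuclideanSpace ℝ (Fin n),
      ⟪W (ψ p), fderiv ℝ ψ p u⟫ = 0) :
    ∀ p ∈ U, ∀ u : EuclideanSpace ℝ (Fin n),
      fderiv ℝ (V ∘ ψ) p u = f (ψ p) • fderiv ℝ ψ p u := by
  intro p hp u
  have hmem : ψ p ∈ Ω := hmaps hp
  rw [fderiv_comp p (hVdiff _ hmem) (hψ p hp)]
  simp only [ContinuousLinearMap.comp_apply]
  rw [hT _ hmem, hWnormal p hp u, zero_smul, add_zero]
end

section
/- Let V be a torqued vector field with conformal scalar f and generating vector field W on an open set Ω ⊆ E^m, and let ψ : U → Ω be a differentiable map on an open set U ⊆ E^n. Suppose V is normal along ψ: ⟪V (ψ p), fderiv ℝ ψ p u⟫ = 0 for all p ∈ U, u ∈ E^n. Then for all p and u: fderiv ℝ (V ∘ ψ) p u = f (ψ p) • fderiv ℝ ψ p u + ⟪W (ψ p), fderiv ℝ ψ p u⟫ • V (ψ p); in particular the orthogonal projection of fderiv ℝ (V ∘ ψ) p u onto the tangent space LinearMap.range (fderiv ℝ ψ p) equals f (ψ p) • fderiv ℝ ψ p u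 (so V^⊥ is an umbilical direction with A_{V^⊥} = −f · Id), and the normal component equals ⟪W (ψ p), fderiv ℝ ψ p u⟫ • V (ψ p) (so D_X V^⊥ = 0 for tangent X orthogonal to W^⊤ and D_{W^⊤} V^⊥ = |W^⊤|² V^⊥). -/
open scoped RealInnerProductSpace

/-- If a torqued vector field `V` (with conformal scalar `f` and
generating field `W`) is normal along a submanifold `ψ : U → Ω`, then
`∇_u (V∘ψ) = f • dψ(u) + ⟪W∘ψ, dψ(u)⟫ • (V∘ψ)`; its tangential component
(the orthogonal projection onto the tangent space) is `f • dψ(u)`, so `V^⊥`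
is an umbilical direction with `A_{V^⊥} = −f · Id`, and its normal component
is `⟪W∘ψ, dψ(u)⟫ • (V∘ψ)`. -/
theorem torqued_normal_along_submanifold (m n : ℕ)
    (Ω : Set (EuclideanSpace ℝ (Fin m))) (hΩ : IsOpen Ω)
    (V W : EuclideanSpace ℝ (Fin m) → EuclideanSpace ℝ (Fin m))
    (f : EuclideanSpace ℝ (Fin m) → ℝ)
    (hVdiff : ∀ x ∈ Ω, DifferentiableAt ℝ V x)
    (hVne : ∀ x ∈ Ω, V x ≠ 0)
    (hT : ∀ x ∈ Ω, ∀ u : EuclideanSpace ℝ (Fin m),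
      fderiv ℝ V x u = f x • u + ⟪W x, u⟫ • V x)
    (hWV : ∀ x ∈ Ω, ⟪W x, V x⟫ = 0)
    (U : Set (EuclideanSpace ℝ (Fin n))) (hU : IsOpen U)
    (ψ : EuclideanSpace ℝ (Fin n) → EuclideanSpace ℝ (Fin m))
    (hmaps : Set.MapsTo ψ U Ω)
    (hψ : ∀ p ∈ U, DifferentiableAt ℝ ψ p)
    (hVnormal : ∀ p ∈ U, ∀ u : EuclideanSpace ℝ (Fin n),
      ⟪V (ψ p), fderiv ℝ ψ p u⟫ = 0) :
    ∀ p ∈ U, ∀ u : EuclideanSpace ℝ (Fin n),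
      fderiv ℝ (V ∘ ψ) p u
          = f (ψ p) • fderiv ℝ ψ p u + ⟪W (ψ p), fderiv ℝ ψ p u⟫ • V (ψ p) ∧
      (Submodule.orthogonalProjectionOnto (LinearMap.range
          ((fderiv ℝ ψ p : EuclideanSpace ℝ (Fin n) →ₗ[ℝ] EuclideanSpace ℝ (Fin m))))
          (fderiv ℝ (V ∘ ψ) p u) : EuclideanSpace ℝ (Fin m))
          = f (ψ p) • fderiv ℝ ψ p u ∧
      fderiv ℝ (V ∘ ψ) p u - f (ψ p) • fderiv ℝ ψ p u
          = ⟪W (ψ p), fderiv ℝ ψ p u⟫ • V (ψ p) := by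
  intro p hp u
  have hpΩ := hmaps hp
  have hchain : fderiv ℝ (V ∘ ψ) p = (fderiv ℝ V (ψ p)).comp (fderiv ℝ ψ p) :=
    fderiv_comp p (hVdiff _ hpΩ) (hψ p hp)
  have h1 : fderiv ℝ (V ∘ ψ) p u
      = f (ψ p) • fderiv ℝ ψ p u + ⟪W (ψ p), fderiv ℝ ψ p u⟫ • V (ψ p) := by
    rw [hchain]; exact hT _ hpΩ _
  refine ⟨h1, ?_, ?_⟩
  · rw [h1, map_add, map_smul, map_smul]
    have hmem : fderiv ℝ ψ p u ∈ LinearMap.range ((fderiv ℝ ψ p : EuclideanSpace ℝ (Fin n) →ₗ[ℝ] EuclideanSpace ℝ (Fin m))) :=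
      LinearMap.mem_range_self _ u
    have hVperp : V (ψ p) ∈ (LinearMap.range ((fderiv ℝ ψ p : EuclideanSpace ℝ (Fin n) →ₗ[ℝ] EuclideanSpace ℝ (Fin m))))ᗮ := by
      intro v hv
      obtain ⟨w, rfl⟩ := hv
      rw [real_inner_comm]
      exact hVnormal p hp w
    rw [Submodule.coe_add, Submodule.coe_smul, Submodule.coe_smul,
      ← Submodule.starProjection_apply, Submodule.starProjection_eq_self_iff.2 hmem,
      Submodule.orthogonalProjectionOnto_apply_of_mem_orthogonal hVperp]
    simp
  · rw [h1]; abel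
end

section
/- Let f : ℝ → ℝ be continuous and F : ℝ → ℝ be differentiable with deriv F = f. If λ : ℝ → ℝ is differentiable, satisfies the ODE deriv λ s = f s * (1 − (λ s)^2) for all s ∈ ℝ, and λ s₀ = Real.tanh (F s₀) at some point s₀, then λ s = Real.tanh (F s) for all s ∈ ℝ. (This is the first integration concluding the classification of proper rectifying submanifolds with anti-torqued axis: the warping function is λ(s) = tanh ∫ f(u) du.) -/
open Set Real

lemma hasDerivAt_tanh (x : ℝ) :
    HasDerivAt Real.tanh (1 - Real.tanh x ^ 2) x := by
  have hcosh : HasDerivAt Real.cosh (Real.sinh x) x := Real.hasDerivAt_cosh x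
  have hsinh : HasDerivAt Real.sinh (Real.cosh x) x := Real.hasDerivAt_sinh x
  have hc : Real.cosh x ≠ 0 := (Real.cosh_pos x).ne'
  have h := hsinh.div hcosh hc
  have heq : ∀ y, Real.tanh y = Real.sinh y / Real.cosh y := fun y =>
    Real.tanh_eq_sinh_div_cosh y
  have h2 : HasDerivAt Real.tanh
      ((Real.cosh x * Real.cosh x - Real.sinh x * Real.sinh x) / Real.cosh x ^ 2) x := by
    have : Real.tanh = fun y => Real.sinh y / Real.cosh y := funext heq
    rw [this]; exact h
  convert h2 using 1
  rw [Real.tanh_eq_sinh_div_cosh, div_pow]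
  have hid : Real.cosh x * Real.cosh x - Real.sinh x * Real.sinh x = 1 := by
    have := Real.cosh_sq_sub_sinh_sq x; nlinarith [this]
  rw [hid]
  have hc2 : Real.cosh x ^ 2 ≠ 0 := pow_ne_zero 2 hc
  field_simp
  exact Real.cosh_sq_sub_sinh_sq x

/-- First integration of the ODE `λ' = f (1 − λ²)`: if `F` is an
antiderivative of the continuous function `f` and `λ` agrees with `tanh ∘ F`
at one point, then `λ = tanh ∘ F` everywhere. -/
theorem ode_first_integration_tanh (f F lam : ℝ → ℝ)
    (hf : Continuous f) (hF : Differentiable ℝ F) (hF' : deriv F = f)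
    (hlam : Differentiable ℝ lam)
    (hode : ∀ s : ℝ, deriv lam s = f s * (1 - (lam s) ^ 2))
    (s₀ : ℝ) (h₀ : lam s₀ = Real.tanh (F s₀)) :
    ∀ s : ℝ, lam s = Real.tanh (F s) := by
  intro s
  -- work on the compact interval [a, b]
  set a : ℝ := min s s₀ - 1 with ha_def
  set b : ℝ := max s s₀ + 1 with hb_def
  have hab : a ≤ b := by
    have := min_le_max (a := s) (b := s₀)
    simp only [ha_def, hb_def]; linarith
  set g : ℝ → ℝ := fun t => Real.tanh (F t) with hg_def
  have hg_diff : Differentiable ℝ g := fun t =>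
    ((hasDerivAt_tanh (F t)).comp t (hF t).hasDerivAt).differentiableAt
  have hg_deriv : ∀ t : ℝ, HasDerivAt g (f t * (1 - (g t) ^ 2)) t := by
    intro t
    have := (hasDerivAt_tanh (F t)).comp t (hF t).hasDerivAt
    have hFd : deriv F t = f t := by rw [hF']
    simpa [hg_def, hFd, mul_comm, Function.comp_def] using this
  have hlam_deriv : ∀ t : ℝ, HasDerivAt lam (f t * (1 - (lam t) ^ 2)) t := by
    intro t
    have := (hlam t).hasDerivAt
    rwa [hode t] at this
  -- bounds on the compact interval
  obtain ⟨C₁, hC₁⟩ := (isCompact_Icc (a := a) (b := b)).exists_bound_of_continuousOn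
    hlam.continuous.continuousOn
  obtain ⟨C₂, hC₂⟩ := (isCompact_Icc (a := a) (b := b)).exists_bound_of_continuousOn
    hg_diff.continuous.continuousOn
  obtain ⟨M, hM⟩ := (isCompact_Icc (a := a) (b := b)).exists_bound_of_continuousOn
    hf.continuousOn
  set R : ℝ := max C₁ C₂ + 1 with hR_def
  have hR_pos : 0 < R := by
    have : 0 ≤ C₁ := le_trans (norm_nonneg _) (hC₁ a ⟨le_refl a, hab⟩)
    have h1 : C₁ ≤ max C₁ C₂ := le_max_left _ _
    simp only [hR_def]; linarith
  have hM0 : 0 ≤ M := le_trans (norm_nonneg _) (hM a ⟨le_refl a, hab⟩)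
  -- the truncated vector field
  set φ : ℝ → ℝ := fun t => min b (max a t) with hφ_def
  have hφ_mem : ∀ t, φ t ∈ Icc a b := by
    intro t
    constructor
    · exact le_min hab (le_max_left a t)
    · exact min_le_left _ _
  have hφ_eq : ∀ t ∈ Icc a b, φ t = t := by
    intro t ht
    simp only [hφ_def]
    rw [max_eq_right ht.1, min_eq_right ht.2]
  set v : ℝ → ℝ → ℝ := fun t x => f (φ t) * (1 - x ^ 2) with hv_def
  set K : NNReal := Real.toNNReal (M * (2 * R)) with hK_def
  have hK_coe : (K : ℝ) = M * (2 * R) := by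
    rw [hK_def, Real.coe_toNNReal]
    positivity
  have hlip : ∀ t : ℝ, LipschitzOnWith K (v t) (Metric.closedBall (0:ℝ) R) := by
    intro t
    apply LipschitzOnWith.of_dist_le_mul
    intro x hx y hy
    rw [Real.dist_eq, Real.dist_eq]
    have hx' : |x| ≤ R := by simpa [Real.dist_eq] using hx
    have hy' : |y| ≤ R := by simpa [Real.dist_eq] using hy
    have h1 : v t x - v t y = f (φ t) * ((y + x) * (y - x)) := by
      simp only [hv_def]; ring
    rw [h1, abs_mul, abs_mul]
    have hft : |f (φ t)| ≤ M := by
      have := hM (φ t) (hφ_mem t)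
      simpa using this
    have hsum : |y + x| ≤ 2 * R := by
      calc |y + x| ≤ |y| + |x| := abs_add_le _ _
        _ ≤ 2 * R := by linarith
    have hxy : |y - x| = |x - y| := abs_sub_comm y x
    rw [hK_coe, hxy]
    calc |f (φ t)| * (|y + x| * |x - y|)
        ≤ M * ((2 * R) * |x - y|) := by
          apply mul_le_mul hft _ (by positivity) hM0
          exact mul_le_mul_of_nonneg_right hsum (abs_nonneg _)
      _ = M * (2 * R) * |x - y| := by ring
  have hmem_lam : ∀ t ∈ Ioo a b, lam t ∈ Metric.closedBall (0:ℝ) R := by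
    intro t ht
    simp only [Metric.mem_closedBall, Real.dist_eq, sub_zero]
    have := hC₁ t (Ioo_subset_Icc_self ht)
    have h1 : C₁ ≤ max C₁ C₂ := le_max_left _ _
    simp only [Real.norm_eq_abs] at this
    simp only [hR_def]; linarith
  have hmem_g : ∀ t ∈ Ioo a b, g t ∈ Metric.closedBall (0:ℝ) R := by
    intro t ht
    simp only [Metric.mem_closedBall, Real.dist_eq, sub_zero]
    have := hC₂ t (Ioo_subset_Icc_self ht)
    have h2 : C₂ ≤ max C₁ C₂ := le_max_right _ _
    simp only [Real.norm_eq_abs] at this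
    simp only [hR_def]; linarith
  have ht₀ : s₀ ∈ Ioo a b := by
    constructor
    · have := min_le_right s s₀; simp only [ha_def]; linarith
    · have := le_max_right s s₀; simp only [hb_def]; linarith
  have hs : s ∈ Ioo a b := by
    constructor
    · have := min_le_left s s₀; simp only [ha_def]; linarith
    · have := le_max_left s s₀; simp only [hb_def]; linarith
  have key : EqOn lam g (Ioo a b) := by
    apply ODE_solution_unique_of_mem_Ioo (fun t _ => hlip t) ht₀ _ _ h₀
    · intro t ht
      refine ⟨?_, hmem_lam t ht⟩
      have h1 := hlam_deriv t
      have h2 : v t (lam t) = f t * (1 - (lam t) ^ 2) := by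
        simp only [hv_def]
        rw [hφ_eq t (Ioo_subset_Icc_self ht)]
      rw [h2]; exact h1
    · intro t ht
      refine ⟨?_, hmem_g t ht⟩
      have h1 := hg_deriv t
      have h2 : v t (g t) = f t * (1 - (g t) ^ 2) := by
        simp only [hv_def]
        rw [hφ_eq t (Ioo_subset_Icc_self ht)]
      rw [h2]; exact h1
  exact key hs
end

section
/- Let Ω : ℝ → E^m be differentiable with ‖Ω s‖ = 1 for all s and ‖deriv Ω s‖ = 1/(1 + s^2) for all s. Then the curve Ψ s = Real.sqrt (1 + s^2) • Ω s satisfies ‖deriv Ψ s‖ = 1 for all s ∈ ℝ; that is, the s-coordinate direction of the rectifying submanifold Ψ = √(1+s²)·Ω is unit, so its induced metric has the warped-product form g = ds² + (s²/(1+s²)) g_N. -/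
open Real

/-- If `Ω : ℝ → E^m` is a differentiable unit-sphere-valued curve
with `‖Ω'(s)‖ = 1/(1+s²)`, then the curve `Ψ(s) = √(1+s²) • Ω(s)` has unit
speed, so the induced metric has the warped-product form
`g = ds² + (s²/(1+s²)) g_N`. -/
theorem rectifying_coordinate_curve_unit_speed (m : ℕ)
    (Ω : ℝ → EuclideanSpace ℝ (Fin m)) (hΩd : Differentiable ℝ Ω)
    (hΩunit : ∀ s : ℝ, ‖Ω s‖ = 1)
    (hΩ' : ∀ s : ℝ, ‖deriv Ω s‖ = 1 / (1 + s ^ 2)) :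
    ∀ s : ℝ, ‖deriv (fun t : ℝ => Real.sqrt (1 + t ^ 2) • Ω t) s‖ = 1 := by
  intro s
  have hpos : (0:ℝ) < 1 + s ^ 2 := by positivity
  have hΩs : HasDerivAt Ω (deriv Ω s) s := (hΩd s).hasDerivAt
  have hsq : HasDerivAt (fun t : ℝ => 1 + t ^ 2) (2 * s) s := by
    simpa using ((hasDerivAt_pow 2 s).const_add 1)
  have hsqrt : HasDerivAt (fun t : ℝ => Real.sqrt (1 + t ^ 2))
      (s / Real.sqrt (1 + s ^ 2)) s := by
    have := (Real.hasDerivAt_sqrt (ne_of_gt hpos)).comp s hsq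
    exact this.congr_deriv (by ring)
  have hΨ : HasDerivAt (fun t : ℝ => Real.sqrt (1 + t ^ 2) • Ω t)
      ((s / Real.sqrt (1 + s ^ 2)) • Ω s + Real.sqrt (1 + s ^ 2) • deriv Ω s) s := by
    exact (hsqrt.smul hΩs).congr_deriv (add_comm _ _)
  rw [hΨ.deriv]
  -- orthogonality
  have horth : inner ℝ (Ω s) (deriv Ω s) = (0:ℝ) := by
    have hconst : (fun t : ℝ => (inner ℝ (Ω t) (Ω t) : ℝ)) = fun _ => 1 := by
      funext t
      rw [real_inner_self_eq_norm_sq, hΩunit t]; norm_num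
    have hd : HasDerivAt (fun t : ℝ => (inner ℝ (Ω t) (Ω t) : ℝ))
        (inner ℝ (Ω s) (deriv Ω s) + inner ℝ (deriv Ω s) (Ω s)) s := hΩs.inner ℝ hΩs
    rw [hconst] at hd
    have h0 : inner ℝ (Ω s) (deriv Ω s) + inner ℝ (deriv Ω s) (Ω s) = (0:ℝ) := by
      have := (hasDerivAt_const s (1:ℝ)).unique hd
      linarith [this]
    have hc : (inner ℝ (deriv Ω s) (Ω s) : ℝ) = inner ℝ (Ω s) (deriv Ω s) :=
      real_inner_comm _ _
    linarith
  have hnorm2 : ‖(s / Real.sqrt (1 + s ^ 2)) • Ω s + Real.sqrt (1 + s ^ 2) • deriv Ω s‖ ^ 2 = 1 := by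
    have horth' : (inner ℝ (deriv Ω s) (Ω s) : ℝ) = 0 := by
      rw [real_inner_comm]; exact horth
    rw [← real_inner_self_eq_norm_sq, inner_add_add_self]
    simp only [real_inner_smul_left, real_inner_smul_right]
    rw [horth', horth, real_inner_self_eq_norm_sq, real_inner_self_eq_norm_sq,
      hΩunit s, hΩ' s]
    have hs : Real.sqrt (1 + s ^ 2) ^ 2 = 1 + s ^ 2 := Real.sq_sqrt hpos.le
    have hsne : Real.sqrt (1 + s ^ 2) ≠ 0 := by positivity
    field_simp
    nlinarith [hs]
  have hnn : (0:ℝ) ≤ ‖(s / Real.sqrt (1 + s ^ 2)) • Ω s + Real.sqrt (1 + s ^ 2) • deriv Ω s‖ :=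
    norm_nonneg _
  nlinarith [hnorm2, hnn]
end

section
/- Let V be an anti-torqued vector field with conformal scalar f on an open set Ω ⊆ E^m and let ψ : U → Ω be twice differentiable on an open set U ⊆ E^n. For p ∈ U let Tan p = LinearMap.range (fderiv ℝ ψ p), let P p denote the orthogonal projection of E^m onto Tan p, and let Vᵀ p = P p (V (ψ p)) (the tangential component of V along ψ); assume the map p ↦ Vᵀ p is differentiable. Suppose ψ is rectifying with axis V: for all p ∈ U and u, w ∈ E^n, ⟪V (ψ p) − Vᵀ p, fderiv ℝ (fun q => fderiv ℝ ψ q w) p u⟫ = 0 (the normal component of V is orthogonal to the first normal space Im h). Then for all p ∈ U and u ∈ E^n: P p (fderiv ℝ (fun q => Vᵀ q) p u) = f (ψ p) • (fderiv ℝ ψ p u − ⟪fderiv ℝ ψ p u, Vᵀ p⟫ • Vᵀ p); that is, the tangential component Vᵀ satisfies ∇_X Vᵀ = f (X − g(X, Vᵀ) Vᵀ) on the submanifold, the key equation from which the warped-product structure J ×_λ N with λ' = f(1 − λ²) follows. -/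
open scoped RealInnerProductSpace

/-- Along a rectifying submanifold `ψ : U → Ω` with anti-torqued
axis `V` (conformal scalar `f`), the tangential component `Vᵀ` of `V`
satisfies `∇_X Vᵀ = f (X − g(X, Vᵀ) Vᵀ)`: the tangential projection of the
ambient derivative of `Vᵀ` in direction `u` equals
`f • (dψ(u) − ⟪dψ(u), Vᵀ⟫ • Vᵀ)`. This is the key equation from which the
warped-product structure `J ×_λ N` with `λ' = f (1 − λ²)` follows. -/
theorem rectifying_submanifold_tangential_equation (m n : ℕ)
    (Ω : Set (EuclideanSpace ℝ (Fin m))) (hΩ : IsOpen Ω)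
    (V : EuclideanSpace ℝ (Fin m) → EuclideanSpace ℝ (Fin m))
    (f : EuclideanSpace ℝ (Fin m) → ℝ)
    (hVdiff : ∀ x ∈ Ω, DifferentiableAt ℝ V x)
    (hVne : ∀ x ∈ Ω, V x ≠ 0)
    (hAT : ∀ x ∈ Ω, ∀ u : EuclideanSpace ℝ (Fin m),
      fderiv ℝ V x u = f x • (u - ⟪u, V x⟫ • V x))
    (U : Set (EuclideanSpace ℝ (Fin n))) (hU : IsOpen U)
    (ψ : EuclideanSpace ℝ (Fin n) → EuclideanSpace ℝ (Fin m))
    (hmaps : Set.MapsTo ψ U Ω)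
    (hψ : ContDiffOn ℝ 2 ψ U)
    (VT : EuclideanSpace ℝ (Fin n) → EuclideanSpace ℝ (Fin m))
    (hVT : ∀ p ∈ U, VT p =
      (Submodule.orthogonalProjectionOnto (LinearMap.range
          (fderiv ℝ ψ p : EuclideanSpace ℝ (Fin n) →ₗ[ℝ] EuclideanSpace ℝ (Fin m))) (V (ψ p)) :
        EuclideanSpace ℝ (Fin m)))
    (hVTdiff : ∀ p ∈ U, DifferentiableAt ℝ VT p)
    (hrect : ∀ p ∈ U, ∀ u w : EuclideanSpace ℝ (Fin n),
      ⟪V (ψ p) - VT p, fderiv ℝ (fun q => fderiv ℝ ψ q w) p u⟫ = 0) :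
    ∀ p ∈ U, ∀ u : EuclideanSpace ℝ (Fin n),
      (Submodule.orthogonalProjectionOnto (LinearMap.range
            (fderiv ℝ ψ p : EuclideanSpace ℝ (Fin n) →ₗ[ℝ] EuclideanSpace ℝ (Fin m)))
          (fderiv ℝ VT p u) : EuclideanSpace ℝ (Fin m))
        = f (ψ p) • (fderiv ℝ ψ p u - ⟪fderiv ℝ ψ p u, VT p⟫ • VT p) := by
  intro p hp u
  set K := LinearMap.range (fderiv ℝ ψ p : EuclideanSpace ℝ (Fin n) →ₗ[ℝ] EuclideanSpace ℝ (Fin m)) with hK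
  have hψdiff : ∀ q ∈ U, DifferentiableAt ℝ ψ q := fun q hq =>
    (hψ.differentiableOn (by norm_num)).differentiableAt (hU.mem_nhds hq)
  have hVψ : DifferentiableAt ℝ (fun q => V (ψ q)) p :=
    (hVdiff _ (hmaps hp)).comp p (hψdiff p hp)
  -- the normal component vanishes against tangent vectors, at every point of U
  have hzero : ∀ w : EuclideanSpace ℝ (Fin n), ∀ q ∈ U,
      ⟪V (ψ q) - VT q, fderiv ℝ ψ q w⟫ = 0 := by
    intro w q hq
    have hmem : fderiv ℝ ψ q w ∈ LinearMap.range (fderiv ℝ ψ q : EuclideanSpace ℝ (Fin n) →ₗ[ℝ] EuclideanSpace ℝ (Fin m)) := ⟨w, rfl⟩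
    have hperp : V (ψ q) - VT q ∈ (LinearMap.range (fderiv ℝ ψ q : EuclideanSpace ℝ (Fin n) →ₗ[ℝ] EuclideanSpace ℝ (Fin m)))ᗮ := by
      rw [hVT q hq]
      exact Submodule.sub_starProjection_mem_orthogonal (K := LinearMap.range (fderiv ℝ ψ q : EuclideanSpace ℝ (Fin n) →ₗ[ℝ] EuclideanSpace ℝ (Fin m))) _
    exact (Submodule.mem_orthogonal' _ _).1 hperp _ hmem
  -- differentiability of q ↦ fderiv ℝ ψ q w at p
  have hfd : ∀ w : EuclideanSpace ℝ (Fin n),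
      DifferentiableAt ℝ (fun q => fderiv ℝ ψ q w) p := by
    intro w
    have h1 : ContDiffOn ℝ 1 (fderiv ℝ ψ) U :=
      hψ.fderiv_of_isOpen hU (by norm_num)
    have h2 : DifferentiableAt ℝ (fderiv ℝ ψ) p :=
      (h1.differentiableOn one_ne_zero).differentiableAt (hU.mem_nhds hp)
    exact h2.clm_apply (differentiableAt_const w)
  -- key: fderiv VT and fderiv (V∘ψ) have equal inner products with tangent vectors
  have key : ∀ w : EuclideanSpace ℝ (Fin n),
      ⟪fderiv ℝ VT p u, fderiv ℝ ψ p w⟫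
        = ⟪fderiv ℝ (fun q => V (ψ q)) p u, fderiv ℝ ψ p w⟫ := by
    intro w
    have hdiffN : DifferentiableAt ℝ (fun q => V (ψ q) - VT q) p :=
      hVψ.sub (hVTdiff p hp)
    have hEq : (fun q => ⟪V (ψ q) - VT q, fderiv ℝ ψ q w⟫)
        =ᶠ[nhds p] fun _ => (0 : ℝ) :=
      Filter.eventuallyEq_of_mem (hU.mem_nhds hp) (hzero w)
    have hfz : fderiv ℝ (fun q => ⟪V (ψ q) - VT q, fderiv ℝ ψ q w⟫) p = 0 := by
      rw [hEq.fderiv_eq, fderiv_fun_const]; rfl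
    have happ := fderiv_inner_apply (𝕜 := ℝ) hdiffN (hfd w) u
    rw [hfz] at happ
    have hfsub : fderiv ℝ (fun q => V (ψ q) - VT q) p u
        = fderiv ℝ (fun q => V (ψ q)) p u - fderiv ℝ VT p u := by
      rw [fderiv_fun_sub hVψ (hVTdiff p hp)]; rfl
    have hr := hrect p hp u w
    simp only [ContinuousLinearMap.zero_apply] at happ
    rw [hr, hfsub, inner_sub_left] at happ
    linarith [happ]
  -- hence equal orthogonal projections
  have hproj_eq : (Submodule.orthogonalProjectionOnto K (fderiv ℝ VT p u) : EuclideanSpace ℝ (Fin m))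
      = Submodule.orthogonalProjectionOnto K (fderiv ℝ (fun q => V (ψ q)) p u) := by
    have hmemperp : fderiv ℝ VT p u - fderiv ℝ (fun q => V (ψ q)) p u ∈ Kᗮ := by
      rw [Submodule.mem_orthogonal']
      rintro k ⟨w, rfl⟩
      rw [inner_sub_left, ContinuousLinearMap.coe_coe, key w, sub_self]
    have h0 := Submodule.orthogonalProjectionOnto_apply_of_mem_orthogonal hmemperp
    rw [map_sub] at h0
    have := sub_eq_zero.1 h0
    exact_mod_cast congrArg (Subtype.val) this
  -- compute the projection of fderiv (V∘ψ)
  have hchain : fderiv ℝ (fun q => V (ψ q)) p u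
      = fderiv ℝ V (ψ p) (fderiv ℝ ψ p u) := by
    rw [show (fun q => V (ψ q)) = V ∘ ψ from rfl,
      fderiv_comp p (hVdiff _ (hmaps hp)) (hψdiff p hp)]; rfl
  have hinner : ⟪fderiv ℝ ψ p u, V (ψ p)⟫ = ⟪fderiv ℝ ψ p u, VT p⟫ := by
    have h := hzero u p hp
    rw [inner_sub_left, sub_eq_zero] at h
    rw [real_inner_comm, h, real_inner_comm]
  have hPt : (Submodule.orthogonalProjectionOnto K (fderiv ℝ ψ p u) : EuclideanSpace ℝ (Fin m))
      = fderiv ℝ ψ p u := Submodule.starProjection_eq_self_iff.2 ⟨u, rfl⟩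
  have hPV : (Submodule.orthogonalProjectionOnto K (V (ψ p)) : EuclideanSpace ℝ (Fin m)) = VT p :=
    (hVT p hp).symm
  rw [hproj_eq, hchain, hAT _ (hmaps hp), map_smul, map_sub, map_smul]
  push_cast
  rw [hPt, hPV, hinner]
end
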